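/- Let γ > 1, k₀ > 0, and let ρ, v¹, v² be C¹ functions on an open set O ⊆ ℝ³ (coordinates (t,x₁,x₂)) with ρ > 0, solving ∂_tρ + ∂₁(ρv¹) + ∂₂(ρv²) = 0 and ∂_t vⁱ + v¹∂₁vⁱ + v²∂₂vⁱ = -(2c/(γ-1))·∂ᵢc for i = 1,2, where c := √(k₀γ)·ρ^{(γ-1)/2}. With w̲ := c/(γ-1) + v¹/2, w := c/(γ-1) - v¹/2, ψ₂ := -v², the following identities hold at every point of O: L(w̲) = -c·T̂(w̲)·(T̂¹+1) + (1/2)c·T̂(ψ₂)·T̂² + (1/2)c·X̂(ψ₂)·X̂² - c·X̂(w̲)·X̂¹; L(w) = c·T̂(w)·(T̂¹-1) + (1/2)c·T̂(ψ₂)·T̂² + c·X̂(w)·X̂¹ + (1/2)c·X̂(ψ₂)·X̂²; and L(ψ₂) = -c·T̂(ψ₂) + c·T̂(w+w̲)·T̂² + c·X̂(w+w̲)·X̂². -/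

import Mathlib

/-- `∂_t` of a function on `ℝ³ = ℝ × ℝ × ℝ` with coordinates `(t, x₁, x₂)`. -/
noncomputable def pdt (f : ℝ × ℝ × ℝ → ℝ) (x : ℝ × ℝ × ℝ) : ℝ := fderiv ℝ f x (1, 0, 0)

/-- `∂₁` of a function on `ℝ³`. -/
noncomputable def pd1 (f : ℝ × ℝ × ℝ → ℝ) (x : ℝ × ℝ × ℝ) : ℝ := fderiv ℝ f x (0, 1, 0)

/-- `∂₂` of a function on `ℝ³`. -/
noncomputable def pd2 (f : ℝ × ℝ × ℝ → ℝ) (x : ℝ × ℝ × ℝ) : ℝ := fderiv ℝ f x (0, 0, 1)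

/-- `X̂`-derivative: `X̂ f = X̂¹ ∂₁ f + X̂² ∂₂ f`. -/
noncomputable def Xd (X1 X2 f : ℝ × ℝ × ℝ → ℝ) (x : ℝ × ℝ × ℝ) : ℝ :=
  X1 x * pd1 f x + X2 x * pd2 f x

/-- `T̂`-derivative, where `T̂¹ = -X̂²` and `T̂² = X̂¹`. -/
noncomputable def Td (X1 X2 f : ℝ × ℝ × ℝ → ℝ) (x : ℝ × ℝ × ℝ) : ℝ :=
  (-X2 x) * pd1 f x + X1 x * pd2 f x

/-- Material derivative `B f = ∂_t f + v¹ ∂₁ f + v² ∂₂ f`. -/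
noncomputable def Bd (v1 v2 f : ℝ × ℝ × ℝ → ℝ) (x : ℝ × ℝ × ℝ) : ℝ :=
  pdt f x + v1 x * pd1 f x + v2 x * pd2 f x

/-- Null derivative `L f = B f - c T̂ f`. -/
noncomputable def Ld (v1 v2 c X1 X2 f : ℝ × ℝ × ℝ → ℝ) (x : ℝ × ℝ × ℝ) : ℝ :=
  Bd v1 v2 f x - c x * Td X1 X2 f x

/-- Sound speed `c = √(k₀γ) ρ^{(γ-1)/2}` of the polytropic gas. -/
noncomputable def cs (γ k₀ : ℝ) (ρ : ℝ × ℝ × ℝ → ℝ) (x : ℝ × ℝ × ℝ) : ℝ :=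
  Real.sqrt (k₀ * γ) * ρ x ^ ((γ - 1) / 2)

/-!
Since `c = √(k₀γ) ρ^((γ-1)/2)`, we have `∇c = ((γ-1)/2) (c/ρ) ∇ρ`, so the continuity equation
becomes `B c = -((γ-1)/2) c (∂₁v¹ + ∂₂v²)`. Combined with the momentum equations this gives the
transport equations of the Riemann invariants,
`B w̲ = -c ∂₁w̲ + (c/2) ∂₂ψ₂`, `B w = c ∂₁w + (c/2) ∂₂ψ₂`, `B ψ₂ = c ∂₂(w + w̲)`.
As `(X̂, T̂)` is an orthonormal frame, `∂₁ = X̂¹ X̂ - X̂² T̂` and `∂₂ = X̂² X̂ + X̂¹ T̂`;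
substituting these into `L = B - c T̂` yields the three identities.
-/

theorem HasFDerivAt.div_const {E : Type*} [NormedAddCommGroup E] [NormedSpace ℝ E]
    {f : E → ℝ} {f' : E →L[ℝ] ℝ} {x : E} (hf : HasFDerivAt f f' x) (a : ℝ) :
    HasFDerivAt (fun y => f y / a) (a⁻¹ • f') x := by
  simpa only [div_eq_mul_inv] using hf.mul_const a⁻¹

section NullFrame

variable {X1 X2 : ℝ × ℝ × ℝ → ℝ} {x : ℝ × ℝ × ℝ}

theorem pd1_eq_Xd_Td (hX : X1 x ^ 2 + X2 x ^ 2 = 1) (f : ℝ × ℝ × ℝ → ℝ) :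
    pd1 f x = X1 x * Xd X1 X2 f x - X2 x * Td X1 X2 f x := by
  unfold Xd Td
  linear_combination (-pd1 f x) * hX

theorem pd2_eq_Xd_Td (hX : X1 x ^ 2 + X2 x ^ 2 = 1) (f : ℝ × ℝ × ℝ → ℝ) :
    pd2 f x = X2 x * Xd X1 X2 f x + X1 x * Td X1 X2 f x := by
  unfold Xd Td
  linear_combination (-pd2 f x) * hX

end NullFrame

section SoundSpeed

variable {γ k₀ : ℝ} {ρ v1 v2 : ℝ × ℝ × ℝ → ℝ} {x : ℝ × ℝ × ℝ}

theorem hasFDerivAt_cs {ρ' : ℝ × ℝ × ℝ →L[ℝ] ℝ} (hρ : HasFDerivAt ρ ρ' x) (hpos : 0 < ρ x) :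
    HasFDerivAt (cs γ k₀ ρ) (((γ - 1) / 2 * cs γ k₀ ρ x / ρ x) • ρ') x := by
  have h := (hρ.rpow_const (p := (γ - 1) / 2) (Or.inl hpos.ne')).const_mul (Real.sqrt (k₀ * γ))
  rw [smul_smul, Real.rpow_sub_one hpos.ne'] at h
  have hcoeff : (γ - 1) / 2 * cs γ k₀ ρ x / ρ x
      = Real.sqrt (k₀ * γ) * ((γ - 1) / 2 * (ρ x ^ ((γ - 1) / 2) / ρ x)) := by
    unfold cs
    ring
  rw [hcoeff]
  exact h

theorem Bd_cs_eq_of_continuity (hρ : DifferentiableAt ℝ ρ x) (hv1 : DifferentiableAt ℝ v1 x)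
    (hv2 : DifferentiableAt ℝ v2 x) (hpos : 0 < ρ x)
    (hcont : pdt ρ x + pd1 (fun y => ρ y * v1 y) x + pd2 (fun y => ρ y * v2 y) x = 0) :
    Bd v1 v2 (cs γ k₀ ρ) x = -((γ - 1) / 2) * cs γ k₀ ρ x * (pd1 v1 x + pd2 v2 x) := by
  simp only [pdt, pd1, pd2, fderiv_fun_mul hρ hv1, fderiv_fun_mul hρ hv2,
    add_apply, smul_apply, smul_eq_mul] at hcont
  simp only [Bd, pdt, pd1, pd2, (hasFDerivAt_cs (γ := γ) (k₀ := k₀) hρ.hasFDerivAt hpos).fderiv,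
    smul_apply, smul_eq_mul]
  field_simp
  linear_combination (γ - 1) * cs γ k₀ ρ x * hcont

end SoundSpeed

section RiemannInvariants

variable {γ : ℝ} {c v1 v2 : ℝ × ℝ × ℝ → ℝ} {x : ℝ × ℝ × ℝ}

theorem Bd_wbar_eq (hγ : γ ≠ 1) (hc : DifferentiableAt ℝ c x) (hv1 : DifferentiableAt ℝ v1 x)
    (hmass : Bd v1 v2 c x = -((γ - 1) / 2) * c x * (pd1 v1 x + pd2 v2 x))
    (hmom1 : Bd v1 v2 v1 x = -(2 * c x / (γ - 1)) * pd1 c x) :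
    Bd v1 v2 (fun y => c y / (γ - 1) + v1 y / 2) x
      = -c x * pd1 (fun y => c y / (γ - 1) + v1 y / 2) x + c x / 2 * pd2 (fun y => -v2 y) x := by
  have hwbar := (hc.hasFDerivAt.div_const (γ - 1)).fun_add (hv1.hasFDerivAt.div_const 2)
  simp only [Bd, pdt, pd1, pd2, hwbar.fderiv, fderiv_fun_neg, add_apply, smul_apply, neg_apply,
    smul_eq_mul] at hmass hmom1 ⊢
  have hγ' : γ - 1 ≠ 0 := sub_ne_zero.mpr hγ
  linear_combination (norm := (field_simp; ring)) hmass / (γ - 1) + hmom1 / 2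

theorem Bd_w_eq (hγ : γ ≠ 1) (hc : DifferentiableAt ℝ c x) (hv1 : DifferentiableAt ℝ v1 x)
    (hmass : Bd v1 v2 c x = -((γ - 1) / 2) * c x * (pd1 v1 x + pd2 v2 x))
    (hmom1 : Bd v1 v2 v1 x = -(2 * c x / (γ - 1)) * pd1 c x) :
    Bd v1 v2 (fun y => c y / (γ - 1) - v1 y / 2) x
      = c x * pd1 (fun y => c y / (γ - 1) - v1 y / 2) x + c x / 2 * pd2 (fun y => -v2 y) x := by
  have hw := (hc.hasFDerivAt.div_const (γ - 1)).fun_sub (hv1.hasFDerivAt.div_const 2)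
  simp only [Bd, pdt, pd1, pd2, hw.fderiv, fderiv_fun_neg, sub_apply, smul_apply, neg_apply,
    smul_eq_mul] at hmass hmom1 ⊢
  have hγ' : γ - 1 ≠ 0 := sub_ne_zero.mpr hγ
  linear_combination (norm := (field_simp; ring)) hmass / (γ - 1) - hmom1 / 2

theorem Bd_neg_v2_eq (hc : DifferentiableAt ℝ c x) (hv1 : DifferentiableAt ℝ v1 x)
    (hmom2 : Bd v1 v2 v2 x = -(2 * c x / (γ - 1)) * pd2 c x) :
    Bd v1 v2 (fun y => -v2 y) x = c x * pd2 (fun y =>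
      (c y / (γ - 1) - v1 y / 2) + (c y / (γ - 1) + v1 y / 2)) x := by
  have hsum := ((hc.hasFDerivAt.div_const (γ - 1)).fun_sub (hv1.hasFDerivAt.div_const 2)).fun_add
    ((hc.hasFDerivAt.div_const (γ - 1)).fun_add (hv1.hasFDerivAt.div_const 2))
  simp only [Bd, pdt, pd1, pd2, hsum.fderiv, fderiv_fun_neg, add_apply, sub_apply, smul_apply,
    neg_apply, smul_eq_mul] at hmom2 ⊢
  linear_combination -hmom2

end RiemannInvariants

theorem stmt_4_general (γ k₀ : ℝ) (hγ : 1 < γ)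
    (O : Set (ℝ × ℝ × ℝ)) (hO : IsOpen O)
    (ρ v1 v2 : ℝ × ℝ × ℝ → ℝ)
    (hρ : ContDiffOn ℝ 1 ρ O) (hv1 : ContDiffOn ℝ 1 v1 O) (hv2 : ContDiffOn ℝ 1 v2 O)
    (hρpos : ∀ x ∈ O, 0 < ρ x)
    (hcont : ∀ x ∈ O,
      pdt ρ x + pd1 (fun y => ρ y * v1 y) x + pd2 (fun y => ρ y * v2 y) x = 0)
    (hmom1 : ∀ x ∈ O, Bd v1 v2 v1 x = -(2 * cs γ k₀ ρ x / (γ - 1)) * pd1 (cs γ k₀ ρ) x)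
    (hmom2 : ∀ x ∈ O, Bd v1 v2 v2 x = -(2 * cs γ k₀ ρ x / (γ - 1)) * pd2 (cs γ k₀ ρ) x)
    (X1 X2 : ℝ × ℝ × ℝ → ℝ) (hX : ∀ x ∈ O, X1 x ^ 2 + X2 x ^ 2 = 1)
    (wb w ψ2 : ℝ × ℝ × ℝ → ℝ)
    (hwb : wb = fun x => cs γ k₀ ρ x / (γ - 1) + v1 x / 2)
    (hw : w = fun x => cs γ k₀ ρ x / (γ - 1) - v1 x / 2)
    (hψ2 : ψ2 = fun x => -v2 x) :
    ∀ x ∈ O,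
      (Ld v1 v2 (cs γ k₀ ρ) X1 X2 wb x
          = -(cs γ k₀ ρ x) * Td X1 X2 wb x * (-X2 x + 1)
            + 1 / 2 * cs γ k₀ ρ x * Td X1 X2 ψ2 x * X1 x
            + 1 / 2 * cs γ k₀ ρ x * Xd X1 X2 ψ2 x * X2 x
            - cs γ k₀ ρ x * Xd X1 X2 wb x * X1 x)
      ∧ (Ld v1 v2 (cs γ k₀ ρ) X1 X2 w x
          = cs γ k₀ ρ x * Td X1 X2 w x * (-X2 x - 1)
            + 1 / 2 * cs γ k₀ ρ x * Td X1 X2 ψ2 x * X1 x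
            + cs γ k₀ ρ x * Xd X1 X2 w x * X1 x
            + 1 / 2 * cs γ k₀ ρ x * Xd X1 X2 ψ2 x * X2 x)
      ∧ (Ld v1 v2 (cs γ k₀ ρ) X1 X2 ψ2 x
          = -(cs γ k₀ ρ x) * Td X1 X2 ψ2 x
            + cs γ k₀ ρ x * Td X1 X2 (fun y => w y + wb y) x * X1 x
            + cs γ k₀ ρ x * Xd X1 X2 (fun y => w y + wb y) x * X2 x) := by
  subst hwb hw hψ2
  intro x hx
  have hdiff {f : ℝ × ℝ × ℝ → ℝ} (hf : ContDiffOn ℝ 1 f O) : DifferentiableAt ℝ f x :=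
    (hf.differentiableOn one_ne_zero).differentiableAt (hO.mem_nhds hx)
  have hγ1 : γ ≠ 1 := hγ.ne'
  have hc : DifferentiableAt ℝ (cs γ k₀ ρ) x :=
    (hasFDerivAt_cs (hdiff hρ).hasFDerivAt (hρpos x hx)).differentiableAt
  have hmass := Bd_cs_eq_of_continuity (γ := γ) (k₀ := k₀) (hdiff hρ) (hdiff hv1) (hdiff hv2)
    (hρpos x hx) (hcont x hx)
  have h1 := pd1_eq_Xd_Td (hX x hx)
  have h2 := pd2_eq_Xd_Td (hX x hx)
  refine ⟨?_, ?_, ?_⟩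
  · rw [Ld, Bd_wbar_eq hγ1 hc (hdiff hv1) hmass (hmom1 x hx), h1, h2]
    ring
  · rw [Ld, Bd_w_eq hγ1 hc (hdiff hv1) hmass (hmom1 x hx), h1, h2]
    ring
  · rw [Ld, Bd_neg_v2_eq hc (hdiff hv1) (hmom2 x hx), h2]
    ring

/-- **Euler equations in the first null frame** in terms of the Riemann invariants
`w̲ = c/(γ-1) + v¹/2`, `w = c/(γ-1) - v¹/2`, and `ψ₂ = -v²`
(here `T̂¹ = -X̂²` and `T̂² = X̂¹`). -/
theorem stmt_4 (γ k₀ : ℝ) (hγ : 1 < γ) (hk : 0 < k₀)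
    (O : Set (ℝ × ℝ × ℝ)) (hO : IsOpen O)
    (ρ v1 v2 : ℝ × ℝ × ℝ → ℝ)
    (hρ : ContDiffOn ℝ 1 ρ O) (hv1 : ContDiffOn ℝ 1 v1 O) (hv2 : ContDiffOn ℝ 1 v2 O)
    (hρpos : ∀ x ∈ O, 0 < ρ x)
    (hcont : ∀ x ∈ O,
      pdt ρ x + pd1 (fun y => ρ y * v1 y) x + pd2 (fun y => ρ y * v2 y) x = 0)
    (hmom1 : ∀ x ∈ O, Bd v1 v2 v1 x = -(2 * cs γ k₀ ρ x / (γ - 1)) * pd1 (cs γ k₀ ρ) x)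
    (hmom2 : ∀ x ∈ O, Bd v1 v2 v2 x = -(2 * cs γ k₀ ρ x / (γ - 1)) * pd2 (cs γ k₀ ρ) x)
    (X1 X2 : ℝ × ℝ × ℝ → ℝ) (hX : ∀ x ∈ O, X1 x ^ 2 + X2 x ^ 2 = 1)
    (wb w ψ2 : ℝ × ℝ × ℝ → ℝ)
    (hwb : wb = fun x => cs γ k₀ ρ x / (γ - 1) + v1 x / 2)
    (hw : w = fun x => cs γ k₀ ρ x / (γ - 1) - v1 x / 2)
    (hψ2 : ψ2 = fun x => -v2 x) :
    ∀ x ∈ O,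
      (Ld v1 v2 (cs γ k₀ ρ) X1 X2 wb x
          = -(cs γ k₀ ρ x) * Td X1 X2 wb x * (-X2 x + 1)
            + 1 / 2 * cs γ k₀ ρ x * Td X1 X2 ψ2 x * X1 x
            + 1 / 2 * cs γ k₀ ρ x * Xd X1 X2 ψ2 x * X2 x
            - cs γ k₀ ρ x * Xd X1 X2 wb x * X1 x)
      ∧ (Ld v1 v2 (cs γ k₀ ρ) X1 X2 w x
          = cs γ k₀ ρ x * Td X1 X2 w x * (-X2 x - 1)
            + 1 / 2 * cs γ k₀ ρ x * Td X1 X2 ψ2 x * X1 x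
            + cs γ k₀ ρ x * Xd X1 X2 w x * X1 x
            + 1 / 2 * cs γ k₀ ρ x * Xd X1 X2 ψ2 x * X2 x)
      ∧ (Ld v1 v2 (cs γ k₀ ρ) X1 X2 ψ2 x
          = -(cs γ k₀ ρ x) * Td X1 X2 ψ2 x
            + cs γ k₀ ρ x * Td X1 X2 (fun y => w y + wb y) x * X1 x
            + cs γ k₀ ρ x * Xd X1 X2 (fun y => w y + wb y) x * X2 x) :=
  stmt_4_general γ k₀ hγ O hO ρ v1 v2 hρ hv1 hv2 hρpos hcont hmom1 hmom2 X1 X2 hX wb w ψ2 hwb hw hψ2
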